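/- Let b_n(0,t) = (e^{-nt}/n)·L_{n-1}^{(1)}(2nt) for n ≥ 1 and b_0(0,t) = 1, where L_k^{(1)} is the Laguerre polynomial of parameter 1. Then b_n satisfies d/dt b_n(0,t) = -n·b_n(0,t) - n·Σ_{k=1}^{n-1} b_k(0,t)·b_{n-k}(0,t), with b_n(0,0) = 1. -/

import Mathlib

open Real Finset

/-- generalized Laguerre polynomial L_k^{(1)} -/
noncomputable def laguerreOne (k : ℕ) (x : ℝ) : ℝ :=
  ∑ j ∈ Finset.range (k + 1),
    (-1 : ℝ) ^ j * (Nat.choose (k + 1) (k - j)) * x ^ j / (Nat.factorial j)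

/-- moments b_n(0,t) of the free unitary Brownian motion -/
noncomputable def bMom (n : ℕ) (t : ℝ) : ℝ :=
  if n = 0 then 1 else Real.exp (-(n : ℝ) * t) / n * laguerreOne (n - 1) (2 * n * t)

/-!
Put `φ_t(z) = (1 + z) e^{-2tz}`. Expanding the Laguerre polynomial gives
`b_n(0,t) = e^{-nt} [z^{n-1}] φ_t^n / n`. By Lagrange inversion, `[z^{n-1}] φ^n / n` is the `n`-th
coefficient of the compositional inverse `g` of `z / φ`, and `(2/n) [z^{n-2}] φ^n` is that of `g²`.
Since `∂_t φ_t^n = -2nz φ_t^n`, the `t`-derivative of `e^{nt} b_n` is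
`-2 [z^{n-2}] φ_t^n = -n [w^n] g² = -n Σ_k [w^k] g · [w^{n-k}] g`, which is the ODE.

Lagrange inversion is proved on truncations: if `T ≡ p(X/φ)` modulo `X^{n+2}` for a polynomial `p`,
then `[X^n] T' φ^{n+1} = (n+1) p_{n+1}`, because `[X^n] (X/φ)^k (X/φ)' φ^{n+1} = δ_{kn}`. Taking
`T = X` identifies the coefficients of `p`, and `T = X²` those of `p²`.
-/

open PowerSeries
open scoped Polynomial

namespace Finset.Nat

theorem sum_antidiagonal_mul_eq_sum_Ico {M : Type*} [CommSemiring M] {f : ℕ → M} (hf : f 0 = 0)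
    (n : ℕ) : ∑ ij ∈ antidiagonal n, f ij.1 * f ij.2 = ∑ k ∈ Ico 1 n, f k * f (n - k) := by
  rw [Nat.sum_antidiagonal_eq_sum_range_succ (fun i j => f i * f j), sum_range_succ,
    Nat.sub_self, hf, mul_zero, add_zero]
  rcases n.eq_zero_or_pos with rfl | hn
  · rfl
  · rw [range_eq_Ico, sum_eq_sum_Ico_succ_bot hn, hf, zero_mul, zero_add]

end Finset.Nat

namespace PowerSeries

theorem X_pow_dvd_aeval_of_X_pow_dvd {R : Type*} [CommSemiring R] {f : R⟦X⟧} (hf : X ∣ f)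
    {p : R[X]} {m : ℕ} (hp : Polynomial.X ^ m ∣ p) : X ^ m ∣ Polynomial.aeval f p := by
  obtain ⟨q, rfl⟩ := hp
  rw [map_mul, map_pow, Polynomial.aeval_X]
  exact (pow_dvd_pow_of_dvd hf m).mul_right _

theorem X_pow_dvd_derivative_of_X_pow_succ_dvd {R : Type*} [CommSemiring R] {g : R⟦X⟧} {m : ℕ}
    (hg : X ^ (m + 1) ∣ g) : X ^ m ∣ d⁄dX R g := by
  rw [X_pow_dvd_iff] at hg ⊢
  intro i hi
  rw [coeff_derivative, hg (i + 1) (by omega), zero_mul]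

variable {K : Type*} [Field K] {φ : K⟦X⟧}

theorem coeff_pow_succ_mul_derivative_X_mul_inv [CharZero K] (hφ : constantCoeff φ ≠ 0)
    (m : ℕ) : coeff m (φ ^ (m + 1) * d⁄dX K (X * φ⁻¹)) = if m = 0 then 1 else 0 := by
  have hinv : φ * φ⁻¹ = 1 := PowerSeries.mul_inv_cancel φ hφ
  have hD : d⁄dX K (X * φ⁻¹) = φ⁻¹ - X * φ⁻¹ ^ 2 * d⁄dX K φ := by
    rw [Derivation.leibniz, derivative_X, derivative_inv', smul_eq_mul, smul_eq_mul]
    ring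
  rcases m with _ | m
  · simp [hD, hinv, mul_sub, ← mul_assoc]
  · -- `φ ^ m * φ'` is `(φ ^ (m + 1))' / (m + 1)`, whose `m`-th coefficient is that of `φ ^ (m + 1)`
    have hsimp : φ ^ (m + 2) * d⁄dX K (X * φ⁻¹) = φ ^ (m + 1) - X * (φ ^ m * d⁄dX K φ) := by
      linear_combination (φ ^ (m + 1) - X * φ ^ m * (φ * φ⁻¹ + 1) * d⁄dX K φ) * hinv
        + φ ^ (m + 2) * hD
    have hpow := congrArg (coeff m) (Derivation.leibniz_pow (d⁄dX K) φ (m + 1))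
    rw [coeff_derivative, Nat.add_sub_cancel, smul_eq_mul, map_nsmul, nsmul_eq_mul] at hpow
    have hm : (m + 1 : K) ≠ 0 := Nat.cast_add_one_ne_zero m
    rw [if_neg m.succ_ne_zero, hsimp, map_sub, coeff_succ_X_mul]
    push_cast at hpow
    rw [sub_eq_zero]
    exact mul_right_cancel₀ hm (hpow.trans (mul_comm _ _))

theorem coeff_X_mul_inv_pow_mul_derivative_mul_pow [CharZero K] (hφ : constantCoeff φ ≠ 0)
    (k n : ℕ) :
    coeff n ((X * φ⁻¹) ^ k * d⁄dX K (X * φ⁻¹) * φ ^ (n + 1)) = if k = n then 1 else 0 := by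
  rcases le_or_gt k n with hkn | hnk
  · obtain ⟨m, rfl⟩ := Nat.exists_eq_add_of_le hkn
    have hcancel : φ⁻¹ ^ k * φ ^ k = 1 := by
      rw [← mul_pow, mul_comm, PowerSeries.mul_inv_cancel φ hφ, one_pow]
    have hsplit : (X * φ⁻¹) ^ k * d⁄dX K (X * φ⁻¹) * φ ^ (k + m + 1)
        = X ^ k * (φ ^ (m + 1) * d⁄dX K (X * φ⁻¹)) := by
      linear_combination (X ^ k * φ ^ (m + 1) * d⁄dX K (X * φ⁻¹)) * hcancel
    rw [hsplit, add_comm k m, coeff_X_pow_mul, coeff_pow_succ_mul_derivative_X_mul_inv hφ]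
    simp
  · rw [if_neg hnk.ne']
    refine X_pow_dvd_iff.mp ?_ n hnk
    rw [mul_pow, mul_assoc, mul_assoc]
    exact dvd_mul_right _ _

theorem coeff_derivative_aeval_X_mul_inv_mul_pow [CharZero K] (hφ : constantCoeff φ ≠ 0)
    (p : K[X]) (n : ℕ) :
    coeff n (d⁄dX K (Polynomial.aeval (X * φ⁻¹) p) * φ ^ (n + 1))
      = (n + 1) * p.coeff (n + 1) := by
  have hN : (Polynomial.derivative p).natDegree < (Polynomial.derivative p).natDegree + n + 1 := by
    omega
  rw [Derivation.map_aeval, Polynomial.aeval_eq_sum_range' hN, smul_eq_mul, sum_mul, sum_mul,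
    map_sum]
  simp_rw [smul_mul_assoc, coeff_smul, coeff_X_mul_inv_pow_mul_derivative_mul_pow hφ,
    smul_eq_mul, mul_ite, mul_one, mul_zero]
  rw [sum_ite_eq', if_pos (mem_range.mpr (by omega)), Polynomial.coeff_derivative, mul_comm]

theorem coeff_derivative_mul_pow_of_X_pow_dvd [CharZero K] (hφ : constantCoeff φ ≠ 0)
    {T : K⟦X⟧} {p : K[X]} {n : ℕ} (hT : X ^ (n + 2) ∣ T - Polynomial.aeval (X * φ⁻¹) p) :
    coeff n (d⁄dX K T * φ ^ (n + 1)) = (n + 1) * p.coeff (n + 1) := by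
  have hD : X ^ (n + 1) ∣ (d⁄dX K T - d⁄dX K (Polynomial.aeval (X * φ⁻¹) p)) * φ ^ (n + 1) := by
    rw [← map_sub]
    exact (X_pow_dvd_derivative_of_X_pow_succ_dvd hT).mul_right _
  rw [← coeff_derivative_aeval_X_mul_inv_mul_pow hφ, ← sub_eq_zero, ← map_sub, ← sub_mul]
  exact X_pow_dvd_iff.mp hD n n.lt_succ_self

theorem exists_X_pow_dvd_X_sub_aeval_X_mul_inv (hφ : constantCoeff φ ≠ 0) (N : ℕ) :
    ∃ p : K[X], X ^ (N + 1) ∣ X - Polynomial.aeval (X * φ⁻¹) p := by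
  induction N with
  | zero => exact ⟨0, by simp⟩
  | succ N ih =>
    obtain ⟨p, u, hu⟩ := ih
    -- cancel the lowest remaining coefficient with a multiple of `(X * φ⁻¹) ^ (N + 1)`
    set c := constantCoeff u * constantCoeff φ ^ (N + 1)
    refine ⟨p + Polynomial.C c * Polynomial.X ^ (N + 1), ?_⟩
    have hrem : X - Polynomial.aeval (X * φ⁻¹) (p + Polynomial.C c * Polynomial.X ^ (N + 1))
        = X ^ (N + 1) * (u - C c * φ⁻¹ ^ (N + 1)) := by
      rw [map_add, map_mul, map_pow, Polynomial.aeval_C, Polynomial.aeval_X,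
        PowerSeries.algebraMap_eq]
      linear_combination hu
    rw [hrem, pow_succ]
    refine mul_dvd_mul_left _ (X_dvd_iff.mpr ?_)
    simp [c, constantCoeff_inv, mul_assoc, ← mul_pow, hφ]

-- By Lagrange inversion, the `k`-th coefficient of the compositional inverse of `X / φ`; at
-- `k = 0` the division by zero yields the correct value `0`.
noncomputable def lagrangeCoeff (φ : K⟦X⟧) (k : ℕ) : K := coeff (k - 1) (φ ^ k) / k

@[simp]
theorem lagrangeCoeff_zero (φ : K⟦X⟧) : lagrangeCoeff φ 0 = 0 := by
  simp [lagrangeCoeff]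

theorem coeff_eq_lagrangeCoeff_of_X_pow_dvd [CharZero K] (hφ : constantCoeff φ ≠ 0) {p : K[X]}
    {n : ℕ} (hp : X ^ (n + 1) ∣ X - Polynomial.aeval (X * φ⁻¹) p) {k : ℕ} (hk : k ≤ n) :
    p.coeff k = lagrangeCoeff φ k := by
  rcases k with _ | j
  · have hX : X ∣ X - Polynomial.aeval (X * φ⁻¹) p := (dvd_pow_self X n.succ_ne_zero).trans hp
    have hC : X ∣ Polynomial.aeval (X * φ⁻¹) (p - Polynomial.C (p.coeff 0)) := by
      have hp0 : Polynomial.X ^ 1 ∣ p - Polynomial.C (p.coeff 0) := by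
        rw [pow_one, Polynomial.X_dvd_iff]
        simp
      simpa using X_pow_dvd_aeval_of_X_pow_dvd (dvd_mul_right X φ⁻¹) hp0
    simpa [PowerSeries.algebraMap_eq] using X_dvd_iff.mp (dvd_add hX hC)
  · have hT : X ^ (j + 2) ∣ X - Polynomial.aeval (X * φ⁻¹) p := (pow_dvd_pow X (by omega)).trans hp
    have h := coeff_derivative_mul_pow_of_X_pow_dvd hφ hT
    rw [derivative_X, one_mul] at h
    rw [lagrangeCoeff, Nat.add_sub_cancel, h]
    push_cast
    field_simp

theorem lagrangeCoeff_convolution [CharZero K] (hφ : constantCoeff φ ≠ 0) (n : ℕ) :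
    (n : K) * ∑ k ∈ Ico 1 n, lagrangeCoeff φ k * lagrangeCoeff φ (n - k)
      = 2 * coeff (n - 1) (X * φ ^ n) := by
  rcases n with _ | m
  · simp
  obtain ⟨p, hp⟩ := exists_X_pow_dvd_X_sub_aeval_X_mul_inv hφ (m + 1)
  -- `X ≡ p(X * φ⁻¹)` modulo `X ^ (m + 2)`, hence `X ^ 2 ≡ p ^ 2 (X * φ⁻¹)` as well
  have hsq : X ^ (m + 2) ∣ X ^ 2 - Polynomial.aeval (X * φ⁻¹) (p ^ 2) := by
    rw [map_pow, sq_sub_sq]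
    exact hp.mul_left _
  have hres := coeff_derivative_mul_pow_of_X_pow_dvd hφ hsq
  have hconv : (p ^ 2).coeff (m + 1)
      = ∑ ij ∈ antidiagonal (m + 1), lagrangeCoeff φ ij.1 * lagrangeCoeff φ ij.2 := by
    rw [sq, Polynomial.coeff_mul]
    refine sum_congr rfl fun ij hij => ?_
    have hsum := mem_antidiagonal.mp hij
    rw [coeff_eq_lagrangeCoeff_of_X_pow_dvd hφ hp (by omega),
      coeff_eq_lagrangeCoeff_of_X_pow_dvd hφ hp (by omega)]
  rw [← Nat.sum_antidiagonal_mul_eq_sum_Ico (lagrangeCoeff_zero φ), ← hconv, Nat.add_sub_cancel,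
    Nat.cast_succ, ← hres]
  have hX2 : d⁄dX K (X ^ 2 : K⟦X⟧) * φ ^ (m + 1) = C 2 * (X * φ ^ (m + 1)) := by
    rw [Derivation.leibniz_pow, derivative_X, map_ofNat]
    simp only [smul_eq_mul, nsmul_eq_mul]
    ring
  rw [hX2, coeff_C_mul]

theorem coeff_one_add_X_pow {R : Type*} [CommSemiring R] (a i : ℕ) :
    coeff i ((1 + X : R⟦X⟧) ^ a) = a.choose i := by
  have hcoe : ((1 + Polynomial.X : R[X]) ^ a : R[X]) = (1 + X : R⟦X⟧) ^ a := by simp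
  rw [← hcoe, Polynomial.coeff_coe, Polynomial.coeff_one_add_X_pow]

theorem hasDerivAt_coeff_rescale_exp (c : ℝ) (j : ℕ) (t : ℝ) :
    HasDerivAt (fun s => coeff j (rescale (c * s) (exp ℝ)))
      (c * coeff j (X * rescale (c * t) (exp ℝ))) t := by
  rcases j with _ | j
  · simpa using hasDerivAt_const t (1 : ℝ)
  · simp only [coeff_rescale, coeff_exp, coeff_succ_X_mul, mul_pow]
    refine (((hasDerivAt_pow (j + 1) t).const_mul (c ^ (j + 1))).mul_const
      ((algebraMap ℚ ℝ) (1 / (j + 1).factorial))).congr_deriv ?_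
    simp only [one_div, map_inv₀, map_natCast, Nat.factorial_succ, Nat.cast_mul,
      Nat.add_sub_cancel]
    field_simp
    push_cast
    ring

theorem hasDerivAt_coeff_mul_rescale_exp (A : ℝ⟦X⟧) (c : ℝ) (m : ℕ) (t : ℝ) :
    HasDerivAt (fun s => coeff m (A * rescale (c * s) (exp ℝ)))
      (c * coeff m (X * (A * rescale (c * t) (exp ℝ)))) t := by
  have hexpand : (fun s => coeff m (A * rescale (c * s) (exp ℝ)))
      = fun s => ∑ ij ∈ antidiagonal m, coeff ij.1 A * coeff ij.2 (rescale (c * s) (exp ℝ)) :=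
    funext fun s => coeff_mul _ _ _
  rw [hexpand, mul_left_comm X A, coeff_mul, mul_sum]
  exact HasDerivAt.fun_sum fun ij _ =>
    ((hasDerivAt_coeff_rescale_exp c ij.2 t).const_mul (coeff ij.1 A)).congr_deriv (by ring)

end PowerSeries

noncomputable def bMomSeries (t : ℝ) : ℝ⟦X⟧ := (1 + X) * rescale (-(2 * t)) (exp ℝ)

theorem constantCoeff_bMomSeries (t : ℝ) : constantCoeff (bMomSeries t) = 1 := by
  rw [bMomSeries, map_mul, ← coeff_zero_eq_constantCoeff_apply (rescale _ _), coeff_rescale]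
  simp

theorem bMomSeries_pow (t : ℝ) (n : ℕ) :
    bMomSeries t ^ n = (1 + X) ^ n * rescale (-(2 * n) * t) (exp ℝ) := by
  rw [bMomSeries, mul_pow, ← map_pow, exp_pow_eq_rescale_exp, rescale_rescale]
  ring_nf

theorem laguerreOne_eq_coeff (k : ℕ) (x : ℝ) :
    laguerreOne k x = coeff k ((1 + X) ^ (k + 1) * rescale (-x) (exp ℝ)) := by
  rw [mul_comm, coeff_mul, Nat.sum_antidiagonal_eq_sum_range_succ
    (fun i j => coeff i (rescale (-x) (exp ℝ)) * coeff j ((1 + X) ^ (k + 1))), laguerreOne]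
  refine sum_congr rfl fun j _ => ?_
  simp only [coeff_rescale, coeff_exp, coeff_one_add_X_pow, one_div, map_inv₀, map_natCast,
    neg_pow x]
  ring

theorem hasDerivAt_coeff_bMomSeries_pow (n m : ℕ) (t : ℝ) :
    HasDerivAt (fun s => coeff m (bMomSeries s ^ n))
      (-(2 * n) * coeff m (X * bMomSeries t ^ n)) t := by
  simp only [bMomSeries_pow]
  exact hasDerivAt_coeff_mul_rescale_exp _ _ m t

theorem bMom_eq_exp_mul_lagrangeCoeff {n : ℕ} (hn : n ≠ 0) (t : ℝ) :
    bMom n t = exp (-n * t) * lagrangeCoeff (bMomSeries t) n := by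
  obtain ⟨k, rfl⟩ := Nat.exists_eq_succ_of_ne_zero hn
  rw [bMom, if_neg hn, laguerreOne_eq_coeff, lagrangeCoeff, bMomSeries_pow, Nat.succ_sub_one,
    neg_mul (2 * (k.succ : ℝ)) t]
  ring

theorem hasDerivAt_lagrangeCoeff_bMomSeries {n : ℕ} (hn : n ≠ 0) (t : ℝ) :
    HasDerivAt (fun s => lagrangeCoeff (bMomSeries s) n)
      (-n * ∑ k ∈ Ico 1 n, lagrangeCoeff (bMomSeries t) k * lagrangeCoeff (bMomSeries t) (n - k))
      t := by
  rw [neg_mul, lagrangeCoeff_convolution (by simp [constantCoeff_bMomSeries])]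
  refine ((hasDerivAt_coeff_bMomSeries_pow n (n - 1) t).div_const n).congr_deriv ?_
  field_simp

theorem sum_Ico_bMom_mul_bMom (n : ℕ) (t : ℝ) :
    ∑ k ∈ Ico 1 n, bMom k t * bMom (n - k) t
      = exp (-n * t) * ∑ k ∈ Ico 1 n,
          lagrangeCoeff (bMomSeries t) k * lagrangeCoeff (bMomSeries t) (n - k) := by
  rw [mul_sum]
  refine sum_congr rfl fun k hk => ?_
  obtain ⟨hk1, hkn⟩ := mem_Ico.mp hk
  rw [bMom_eq_exp_mul_lagrangeCoeff (by omega), bMom_eq_exp_mul_lagrangeCoeff (by omega),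
    Nat.cast_sub hkn.le]
  have hexp : exp (-k * t) * exp (-(n - k) * t) = exp (-n * t) := by
    rw [← exp_add]
    ring_nf
  linear_combination (lagrangeCoeff (bMomSeries t) k * lagrangeCoeff (bMomSeries t) (n - k)) * hexp

theorem laguerreOne_zero_right (k : ℕ) : laguerreOne k 0 = k + 1 := by
  simp [laguerreOne, sum_range_succ']

theorem bMom_apply_zero (n : ℕ) : bMom n 0 = 1 := by
  rcases n with _ | k
  · simp [bMom]
  · simp [bMom, laguerreOne_zero_right, Nat.cast_add_one_ne_zero]

theorem bMom_ode (n : ℕ) (hn : 1 ≤ n) (t : ℝ) :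
    HasDerivAt (fun s => bMom n s)
      (-(n : ℝ) * bMom n t - n * ∑ k ∈ Finset.Ico 1 n, bMom k t * bMom (n - k) t) t ∧
    bMom n 0 = 1 := by
  have hn' : n ≠ 0 := Nat.one_le_iff_ne_zero.mp hn
  refine ⟨?_, bMom_apply_zero n⟩
  have hexp : HasDerivAt (fun s => exp (-n * s)) (exp (-n * t) * (-n * 1)) t :=
    ((hasDerivAt_id' t).const_mul (-(n : ℝ))).exp
  rw [sum_Ico_bMom_mul_bMom, bMom_eq_exp_mul_lagrangeCoeff hn' t,
    funext (bMom_eq_exp_mul_lagrangeCoeff hn')]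
  exact (hexp.mul (hasDerivAt_lagrangeCoeff_bMomSeries hn' t)).congr_deriv (by ring)
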